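/- arXiv:math/0311284 — 3 statements merged into one kernel-verified Lean document; each statement's English description precedes it below -/
import Mathlib

section
/- Let λ₁,...,λ₄ be positive coprime integers associated with a Fano tetrahedron, h = Σλᵢ. Then gcd(λᵢ, h) = 1 for each i = 1,...,4. -/
/-!
Suppose `d > 1` divides both `l i` and `h`. For a sign `ε = ±1` put `c t = (ε l t) mod d`, so
`c i = 0` and `0 ≤ c t < d`. The two sums `∑ (l t mod d)` and `∑ (-l t mod d)` are positive
multiples of `d` (not every `l t` is divisible by `d`, by coprimality), and together they equal
`d · #{t | d ∤ l t} ≤ 3d`; hence for one sign `∑ c t = d`. Since `∑ c t x t ≡ ε ∑ l t x t = 0`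
modulo `d`, the point `z = ∑ (c t / d) x t` of the facet opposite `x i` is a lattice point. It is
not a vertex because every `c t < d`, and it is not the origin because the barycentric coordinates
`l t / h` of the origin are all positive. This contradicts the Fano property.
-/

/-- The real vector corresponding to a lattice point of `ℤ³`. -/
noncomputable def toR (x : Fin 3 → ℤ) : Fin 3 → ℝ := fun i => (x i : ℝ)

/-- A lattice tetrahedron in `ℤ³` is *Fano* if its vertices are affinely independent
lattice points, and the only lattice point it contains other than its vertices is the
origin, which lies strictly in its interior. -/
def IsFanoTetra (x : Fin 4 → Fin 3 → ℤ) : Prop :=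
  AffineIndependent ℝ (fun i => toR (x i)) ∧
  (0 : Fin 3 → ℝ) ∈ interior (convexHull ℝ (Set.range fun i => toR (x i))) ∧
  ∀ p : Fin 3 → ℤ, toR p ∈ convexHull ℝ (Set.range fun i => toR (x i)) →
    p = 0 ∨ ∃ i, p = x i

open Finset

theorem AffineIndependent.eq_of_sum_smul_eq {k V ι : Type*} [Ring k] [AddCommGroup V]
    [Module k V] [Fintype ι] {p : ι → V} (hp : AffineIndependent k p) {w w' : ι → k}
    (hw : ∑ t, w t = 1) (hw' : ∑ t, w' t = 1) (h : ∑ t, w t • p t = ∑ t, w' t • p t) :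
    w = w' := by
  refine (affineIndependent_iff_eq_of_fintype_affineCombination_eq k p).mp hp w w' hw hw' ?_
  rwa [univ.affineCombination_eq_linear_combination p w hw,
    univ.affineCombination_eq_linear_combination p w' hw']

theorem Int.emod_add_neg_emod {q : ℤ} (hq : 0 < q) (a : ℤ) :
    a % q + (-a) % q = if q ∣ a then 0 else q := by
  rw [Int.neg_emod]
  split_ifs with h
  · simp [Int.emod_eq_zero_of_dvd h]
  · rw [Int.natAbs_of_nonneg hq.le]; ring

theorem exists_unit_sum_mul_emod_eq {ι : Type*} [Fintype ι] {q : ℤ} (hq : 0 < q) {l : ι → ℤ}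
    (hsum : q ∣ ∑ t, l t) (hnot : ∃ t, ¬ q ∣ l t)
    (hcard : #{t | ¬ q ∣ l t} ≤ 3) :
    ∃ ε : ℤˣ, ∑ t, (ε * l t) % q = q := by
  have hdvd (ε : ℤ) : q ∣ ∑ t, (ε * l t) % q := by
    refine Int.modEq_zero_iff_dvd.mp
      ((Int.ModEq.sum fun t _ => Int.mod_modEq (ε * l t) q).trans ?_)
    rw [← mul_sum]
    exact Int.modEq_zero_iff_dvd.mpr (hsum.mul_left ε)
  have hpos (ε : ℤˣ) : 0 < ∑ t, (ε * l t) % q := by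
    obtain ⟨t, ht⟩ := hnot
    refine sum_pos' (fun s _ => Int.emod_nonneg _ hq.ne') ⟨t, mem_univ t, ?_⟩
    refine (Int.emod_nonneg _ hq.ne').lt_of_ne' fun h0 => ht ?_
    exact (Units.dvd_mul_left).mp (Int.dvd_of_emod_eq_zero h0)
  have hpair : ∑ t, l t % q + ∑ t, (-l t) % q = q * #{t | ¬ q ∣ l t} := by
    rw [← sum_add_distrib, card_filter, Nat.cast_sum, mul_sum]
    refine sum_congr rfl fun t _ => ?_
    rw [Int.emod_add_neg_emod hq]
    split_ifs <;> simp
  have hplus := hpos 1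
  have hminus := hpos (-1)
  simp only [Units.val_one, Units.val_neg, one_mul, neg_one_mul] at hplus hminus
  obtain ⟨a, ha⟩ := hdvd 1
  obtain ⟨b, hb⟩ := hdvd (-1)
  simp only [one_mul, neg_one_mul] at ha hb
  rw [ha] at hplus
  rw [hb] at hminus
  have hab : a + b ≤ 3 := by
    have : q * (a + b) ≤ q * 3 := by
      rw [mul_add, ← ha, ← hb, hpair]; gcongr; exact_mod_cast hcard
    exact le_of_mul_le_mul_left this hq
  have ha0 := pos_of_mul_pos_right hplus hq.le
  have hb0 := pos_of_mul_pos_right hminus hq.le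
  obtain rfl | rfl : a = 1 ∨ b = 1 := by omega
  · exact ⟨1, by simpa using ha⟩
  · exact ⟨-1, by simpa using hb⟩

theorem exists_smul_eq_sum_emod_smul {ι κ : Type*} [Fintype ι] {l : ι → ℤ} {x : ι → κ → ℤ}
    (hbary : ∑ t, l t • x t = 0) (ε q : ℤ) :
    ∃ z : κ → ℤ, q • z = ∑ t, ((ε * l t) % q) • x t := by
  have hdvd (k : κ) : q ∣ ∑ t, (ε * l t) % q * x t k := by
    refine Int.modEq_zero_iff_dvd.mp ((Int.ModEq.sum fun t _ =>
      (Int.mod_modEq (ε * l t) q).mul_right (x t k)).trans ?_)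
    have : ∑ t, l t * x t k = 0 := by simpa [Finset.sum_apply] using congrFun hbary k
    simp only [mul_assoc, ← mul_sum, this, mul_zero, Int.ModEq.refl]
  choose z hz using hdvd
  exact ⟨z, funext fun k => by simpa [Finset.sum_apply, eq_comm] using hz k⟩

theorem toR_sum_smul {ι : Type*} [Fintype ι] (c : ι → ℤ) (x : ι → Fin 3 → ℤ) :
    toR (∑ t, c t • x t) = ∑ t, (c t : ℝ) • toR (x t) := by
  ext k
  simp [toR, Finset.sum_apply]

theorem toR_smul (q : ℤ) (z : Fin 3 → ℤ) : toR (q • z) = (q : ℝ) • toR z := by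
  ext k
  simp [toR]

theorem smul_ne_sum_smul_of_fano {ι : Type*} [Fintype ι] {x : ι → Fin 3 → ℤ}
    (hind : AffineIndependent ℝ fun i => toR (x i))
    (honly : ∀ p : Fin 3 → ℤ, toR p ∈ convexHull ℝ (Set.range fun i => toR (x i)) →
      p = 0 ∨ ∃ i, p = x i)
    {l : ι → ℤ} (hl : ∀ t, 0 < l t) (hbary : ∑ t, l t • x t = 0)
    {q : ℤ} {c : ι → ℤ} (hc0 : ∀ t, 0 ≤ c t) (hcq : ∀ t, c t < q) (hsum : ∑ t, c t = q)
    (hzero : ∃ t, c t = 0) (z : Fin 3 → ℤ) :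
    q • z ≠ ∑ t, c t • x t := by
  classical
  intro hz
  obtain ⟨t₀, ht₀⟩ := hzero
  have hq : (0 : ℝ) < q := by exact_mod_cast (hc0 t₀).trans_lt (hcq t₀)
  set w : ι → ℝ := fun t => c t / q
  have hw : ∑ t, w t = 1 := by
    rw [← sum_div, div_eq_one_iff_eq hq.ne']; exact_mod_cast hsum
  have hzw : toR z = ∑ t, w t • toR (x t) := by
    have := congrArg toR hz
    rw [toR_smul, toR_sum_smul] at this
    simp only [w, div_eq_inv_mul, ← smul_smul, ← smul_sum, ← this, inv_smul_smul₀ hq.ne']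
  have hmem : toR z ∈ convexHull ℝ (Set.range fun i => toR (x i)) := hzw ▸
    (convex_convexHull ℝ _).sum_mem (fun t _ => div_nonneg (by exact_mod_cast hc0 t) hq.le) hw
      fun t _ => subset_convexHull ℝ _ ⟨t, rfl⟩
  rcases honly z hmem with rfl | ⟨j, rfl⟩
  · set H : ℝ := ∑ t, (l t : ℝ)
    have hH : 0 < H := by
      have : Nonempty ι := ⟨t₀⟩
      exact sum_pos (fun t _ => by exact_mod_cast hl t) univ_nonempty
    have h0 : ∑ t, (l t / H) • toR (x t) = ∑ t, w t • toR (x t) := by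
      rw [← hzw]
      simp only [div_eq_inv_mul, ← smul_smul, ← smul_sum, ← toR_sum_smul, hbary]
      ext k; simp [toR]
    have := congrFun (hind.eq_of_sum_smul_eq (by rw [← sum_div, div_self hH.ne']) hw h0) t₀
    simp only [w, ht₀, Int.cast_zero, zero_div] at this
    exact (div_pos (by exact_mod_cast hl t₀) hH).ne' this
  · have := congrFun (hind.eq_of_sum_smul_eq hw (w' := Pi.single j 1) (by simp)
      (by simpa using hzw.symm)) j
    simp only [w, Pi.single_eq_same, div_eq_one_iff_eq hq.ne'] at this
    exact (hcq j).ne (by exact_mod_cast this)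

theorem fanoTetra_weights_coprime_to_sum
    (x : Fin 4 → Fin 3 → ℤ) (hx : IsFanoTetra x)
    (l : Fin 4 → ℤ) (hpos : ∀ i, 0 < l i)
    (hgcd : Int.gcd (Int.gcd (Int.gcd (l 0) (l 1)) (l 2)) (l 3) = 1)
    (hbary : (∑ i, l i • x i) = 0)
    (h : ℤ) (hh : h = l 0 + l 1 + l 2 + l 3) :
    ∀ i, Int.gcd (l i) h = 1 := by
  obtain ⟨hind, -, honly⟩ := hx
  intro i
  by_contra hne
  set d := Int.gcd (l i) h
  have hd : (0 : ℤ) < d := by exact_mod_cast Int.gcd_pos_of_ne_zero_left _ (hpos i).ne'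
  have hdi : (d : ℤ) ∣ l i := Int.gcd_dvd_left _ _
  have hdh : (d : ℤ) ∣ ∑ t, l t := by
    rw [Fin.sum_univ_four, ← hh]
    exact Int.gcd_dvd_right _ _
  have hnot : ∃ t, ¬ (d : ℤ) ∣ l t := by
    by_contra! hall
    have := Int.dvd_coe_gcd (Int.dvd_coe_gcd (Int.dvd_coe_gcd (hall 0) (hall 1)) (hall 2)) (hall 3)
    rw [hgcd] at this
    exact hne (Nat.dvd_one.mp (Int.natCast_dvd_natCast.mp this))
  have hcard : #{t | ¬ (d : ℤ) ∣ l t} ≤ 3 :=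
    calc #{t | ¬ (d : ℤ) ∣ l t} ≤ #(univ.erase i) :=
          card_le_card fun t ht =>
            mem_erase.mpr ⟨by rintro rfl; exact (mem_filter.mp ht).2 hdi, mem_univ t⟩
      _ = 3 := by simp
  obtain ⟨ε, hε⟩ := exists_unit_sum_mul_emod_eq hd hdh hnot hcard
  obtain ⟨z, hz⟩ := exists_smul_eq_sum_emod_smul hbary ε d
  exact smul_ne_sum_smul_of_fano hind honly hpos hbary (fun t => Int.emod_nonneg _ hd.ne')
    (fun t => Int.emod_lt_of_pos _ hd) hε ⟨i, Int.emod_eq_zero_of_dvd (hdi.mul_left _)⟩ z hz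
end

section
/- The tetrahedron in ℤ³ with vertices (1,0,0), (0,1,0), (-2,2,7), (1,-2,-5) is Fano, and the barycentric coordinate of the origin with respect to these vertices is (3/19, 4/19, 5/19, 7/19). -/
/-!
Up to the factor `19`, the barycentric coordinates of a point `p` with respect to the tetrahedron
are four explicit affine functions of `p` with integer coefficients. At `p = 0` they are
`(3, 4, 5, 7)`, all positive, so the origin is interior. A lattice point lies in the tetrahedron iff the four integer
values are nonnegative, and this system of inequalities has only five integer solutions.
-/

theorem toR_zero : toR 0 = 0 := by
  funext j
  simp [toR]

theorem AffineBasis.coord_eq_of_sum_smul {ι k V : Type*} [Fintype ι] [Ring k] [AddCommGroup V]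
    [Module k V] (b : AffineBasis ι k V) {w : ι → k} (hw : ∑ i, w i = 1) {x : V}
    (hx : ∑ i, w i • b i = x) (i : ι) : b.coord i x = w i := by
  subst hx
  rw [← Finset.affineCombination_eq_linear_combination _ _ _ hw]
  exact b.coord_apply_combination_of_mem (Finset.mem_univ i) hw

namespace Tetrahedron3457

def vertex : Fin 4 → Fin 3 → ℤ := ![![1, 0, 0], ![0, 1, 0], ![-2, 2, 7], ![1, -2, -5]]

/-- `19` times the barycentric coordinates of `p`, read off from the inverse of the matrix with
rows `(vertex i, 1)`, whose determinant is `19`. -/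
def bary (p : Fin 3 → ℤ) : Fin 4 → ℤ :=
  ![16 * p 0 - 3 * p 1 + 5 * p 2 + 3, -4 * p 0 + 15 * p 1 - 6 * p 2 + 4,
    -5 * p 0 - 5 * p 1 + 2 * p 2 + 5, -7 * p 0 - 7 * p 1 - p 2 + 7]

theorem sum_bary_div (p : Fin 3 → ℤ) : ∑ i, (bary p i : ℝ) / 19 = 1 := by
  simp only [Fin.sum_univ_four, bary]
  push_cast
  ring

theorem sum_bary_div_smul (p : Fin 3 → ℤ) :
    ∑ i, ((bary p i : ℝ) / 19) • toR (vertex i) = toR p := by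
  funext j
  fin_cases j <;>
    simp only [Finset.sum_apply, Pi.smul_apply, smul_eq_mul, Fin.sum_univ_four, bary, vertex, toR,
      Fin.zero_eta, Fin.mk_one, Fin.reduceFinMk, Matrix.cons_val, Matrix.cons_val_zero,
      Matrix.cons_val_one] <;>
    push_cast <;> ring

theorem bary_zero_div : (fun i => (bary 0 i : ℝ) / 19) = ![3 / 19, 4 / 19, 5 / 19, 7 / 19] := by
  funext i
  fin_cases i <;> simp [bary]

theorem affineIndependent_vertex : AffineIndependent ℝ fun i => toR (vertex i) := by
  rw [affineIndependent_iff_of_fintype]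
  intro w hw hv i
  rw [Finset.weightedVSub_eq_linear_combination _ hw] at hv
  have h0 := congrFun hv 0
  have h1 := congrFun hv 1
  have h2 := congrFun hv 2
  simp only [Finset.sum_apply, Pi.smul_apply, smul_eq_mul, Fin.sum_univ_four, vertex, toR,
    Matrix.cons_val, Matrix.cons_val_zero, Matrix.cons_val_one, Pi.zero_apply] at h0 h1 h2
  push_cast at h0 h1 h2
  rw [Fin.sum_univ_four] at hw
  fin_cases i <;> simp only [Fin.zero_eta, Fin.mk_one, Fin.reduceFinMk] <;> linarith

noncomputable def basis : AffineBasis (Fin 4) ℝ (Fin 3 → ℝ) :=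
  ⟨fun i => toR (vertex i), affineIndependent_vertex, by
    rw [affineIndependent_vertex.affineSpan_eq_top_iff_card_eq_finrank_add_one]
    simp⟩

theorem coe_basis : ⇑basis = fun i => toR (vertex i) := rfl

theorem basis_coord (p : Fin 3 → ℤ) (i : Fin 4) :
    basis.coord i (toR p) = (bary p i : ℝ) / 19 :=
  basis.coord_eq_of_sum_smul (sum_bary_div p) (sum_bary_div_smul p) i

theorem toR_mem_convexHull_iff (p : Fin 3 → ℤ) :
    toR p ∈ convexHull ℝ (Set.range fun i => toR (vertex i)) ↔ ∀ i, 0 ≤ bary p i := by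
  rw [← coe_basis, basis.convexHull_eq_nonneg_coord, Set.mem_ofPred_eq]
  simp only [basis_coord]
  exact forall_congr' fun i => by rw [div_nonneg_iff]; norm_num

theorem eq_zero_or_eq_vertex_of_bary_nonneg {p : Fin 3 → ℤ} (hp : ∀ i, 0 ≤ bary p i) :
    p = 0 ∨ ∃ i, p = vertex i := by
  obtain ⟨x, y, z, rfl⟩ : ∃ x y z : ℤ, p = ![x, y, z] :=
    ⟨p 0, p 1, p 2, by funext j; fin_cases j <;> rfl⟩
  have h0 := hp 0
  have h1 := hp 1
  have h2 := hp 2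
  have h3 := hp 3
  simp only [bary, Fin.isValue, Matrix.cons_val] at h0 h1 h2 h3
  have solutions : (x = 0 ∧ y = 0 ∧ z = 0) ∨ (x = 1 ∧ y = 0 ∧ z = 0) ∨ (x = 0 ∧ y = 1 ∧ z = 0) ∨
      (x = -2 ∧ y = 2 ∧ z = 7) ∨ (x = 1 ∧ y = -2 ∧ z = -5) := by
    obtain ⟨hx₀, hx₁⟩ : -2 ≤ x ∧ x ≤ 1 := by omega
    obtain ⟨hy₀, hy₁⟩ : -2 ≤ y ∧ y ≤ 2 := by omega
    interval_cases x <;> interval_cases y <;> omega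
  rcases solutions with ⟨rfl, rfl, rfl⟩ | ⟨rfl, rfl, rfl⟩ | ⟨rfl, rfl, rfl⟩ | ⟨rfl, rfl, rfl⟩ |
    ⟨rfl, rfl, rfl⟩
  exacts [Or.inl (by ext j; fin_cases j <;> rfl), Or.inr ⟨0, rfl⟩, Or.inr ⟨1, rfl⟩,
    Or.inr ⟨2, rfl⟩, Or.inr ⟨3, rfl⟩]

theorem zero_mem_interior_convexHull :
    (0 : Fin 3 → ℝ) ∈ interior (convexHull ℝ (Set.range fun i => toR (vertex i))) := by
  rw [← coe_basis, basis.interior_convexHull, ← toR_zero]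
  intro i
  rw [basis_coord]
  fin_cases i <;> norm_num [bary]

theorem sum_smul_vertex_eq_zero :
    ∑ i, (![(3 : ℝ) / 19, 4 / 19, 5 / 19, 7 / 19] i) • toR (vertex i) = 0 := by
  simpa only [← bary_zero_div, toR_zero] using sum_bary_div_smul 0

theorem isFanoTetra_vertex : IsFanoTetra vertex :=
  ⟨affineIndependent_vertex, zero_mem_interior_convexHull, fun p hp =>
    eq_zero_or_eq_vertex_of_bary_nonneg ((toR_mem_convexHull_iff p).1 hp)⟩

end Tetrahedron3457

open Tetrahedron3457 in
theorem tetrahedron_3457_isFano :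
    IsFanoTetra ![![1, 0, 0], ![0, 1, 0], ![-2, 2, 7], ![1, -2, -5]] ∧
    (∑ i, (![(3 : ℝ) / 19, 4 / 19, 5 / 19, 7 / 19] i) •
        toR (![![1, 0, 0], ![0, 1, 0], ![-2, 2, 7], ![1, -2, -5]] i)) = 0 ∧
    (∑ i, (![(3 : ℝ) / 19, 4 / 19, 5 / 19, 7 / 19] i)) = 1 := by
  refine ⟨isFanoTetra_vertex, sum_smul_vertex_eq_zero, ?_⟩
  simpa only [← bary_zero_div] using sum_bary_div 0
end

section
/- The octahedron with vertices ±e₁, ±e₂, ±(1,1,2) in ℤ³ is a Fano polytope: it is convex, its only non-vertex lattice point is the origin, and the origin is strictly in its interior. -/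
/-- A convex lattice polytope (given by its vertex set `V ⊂ ℤ³`) is *Fano* if the only
non-vertex lattice point it contains is the origin, which lies strictly in its interior. -/
def IsFanoPolytope (V : Set (Fin 3 → ℤ)) : Prop :=
  (0 : Fin 3 → ℝ) ∈ interior (convexHull ℝ (toR '' V)) ∧
  ∀ p : Fin 3 → ℤ, toR p ∈ convexHull ℝ (toR '' V) → p = 0 ∨ p ∈ V

section ConvexHull

variable {E : Type*} [AddCommGroup E] [Module ℝ E]

theorem smul_mem_convexHull_of_abs_le_one {s : Set E} {a : E} (ha : a ∈ s) (hna : -a ∈ s)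
    {t : ℝ} (ht : |t| ≤ 1) : t • a ∈ convexHull ℝ s := by
  obtain ⟨ht₁, ht₂⟩ := abs_le.mp ht
  have hcombo : ((1 + t) / 2) • a + ((1 - t) / 2) • -a = t • a := by
    rw [smul_neg, ← sub_eq_add_neg, ← sub_smul]; congr 1; ring
  rw [← hcombo]
  exact convex_convexHull ℝ s (subset_convexHull ℝ s ha) (subset_convexHull ℝ s hna)
    (by linarith) (by linarith) (by ring)

theorem smul_add_smul_add_smul_mem_convexHull (a b c : E) {x y z : ℝ} (hx : |x| ≤ 1 / 3)
    (hy : |y| ≤ 1 / 3) (hz : |z| ≤ 1 / 3) :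
    x • a + y • b + z • c ∈ convexHull ℝ {a, -a, b, -b, c, -c} := by
  have h3 : ∀ {t : ℝ}, |t| ≤ 1 / 3 → |3 * t| ≤ 1 := fun ht => by
    rw [abs_mul, abs_of_pos three_pos]; linarith
  have hcombo : ∑ i : Fin 3, (1 / 3 : ℝ) • ![(3 * x) • a, (3 * y) • b, (3 * z) • c] i =
      x • a + y • b + z • c := by
    simp only [Fin.sum_univ_three, Matrix.cons_val, smul_smul, one_div,
      inv_mul_cancel_left₀ (three_ne_zero (α := ℝ))]
  rw [← hcombo]
  refine (convex_convexHull ℝ _).sum_mem (fun _ _ => by norm_num) (by norm_num) fun i _ => ?_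
  fin_cases i
  exacts [smul_mem_convexHull_of_abs_le_one (by simp) (by simp) (h3 hx),
    smul_mem_convexHull_of_abs_le_one (by simp) (by simp) (h3 hy),
    smul_mem_convexHull_of_abs_le_one (by simp) (by simp) (h3 hz)]

theorem convex_setOf_abs_add_abs_add_abs_le (f g h : E →ₗ[ℝ] ℝ) (r : ℝ) :
    Convex ℝ {v | |f v| + |g v| + |h v| ≤ r} := by
  have habs : ∀ φ : E →ₗ[ℝ] ℝ, ConvexOn ℝ Set.univ fun v => |φ v| := fun φ =>
    (convexOn_norm convex_univ).comp_linearMap φ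
  simpa using (((habs f).add (habs g)).add (habs h)).convex_le r

end ConvexHull

abbrev octahedron112 : Set (Fin 3 → ℤ) :=
  {![1, 0, 0], ![-1, 0, 0], ![0, 1, 0], ![0, -1, 0], ![1, 1, 2], ![-1, -1, -2]}

theorem toR_neg (x : Fin 3 → ℤ) : toR (-x) = -toR x := by
  funext i; simp [toR]

theorem image_toR_octahedron112 :
    toR '' octahedron112 = {toR ![1, 0, 0], -toR ![1, 0, 0], toR ![0, 1, 0], -toR ![0, 1, 0],
      toR ![1, 1, 2], -toR ![1, 1, 2]} := by
  simp [Set.image_insert_eq, ← toR_neg]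

theorem zero_mem_interior_convexHull_octahedron112 :
    (0 : Fin 3 → ℝ) ∈ interior (convexHull ℝ (toR '' octahedron112)) := by
  have hU : IsOpen {v : Fin 3 → ℝ | |v 0 - v 2 / 2| < 1 / 3 ∧ |v 1 - v 2 / 2| < 1 / 3 ∧
      |v 2 / 2| < 1 / 3} :=
    (isOpen_lt (by fun_prop) continuous_const).and
      ((isOpen_lt (by fun_prop) continuous_const).and (isOpen_lt (by fun_prop) continuous_const))
  refine mem_interior.mpr ⟨_, fun v hv => ?_, hU, by norm_num⟩
  have hv_eq : v = (v 0 - v 2 / 2) • toR ![1, 0, 0] + (v 1 - v 2 / 2) • toR ![0, 1, 0] +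
      (v 2 / 2) • toR ![1, 1, 2] := by
    funext i; fin_cases i <;> simp [toR]
  rw [hv_eq, image_toR_octahedron112]
  exact smul_add_smul_add_smul_mem_convexHull _ _ _ hv.1.le hv.2.1.le hv.2.2.le

theorem convexHull_octahedron112_subset :
    convexHull ℝ (toR '' octahedron112) ⊆ {v | |2 * v 0 - v 2| + |2 * v 1 - v 2| + |v 2| ≤ 2} := by
  have hconv := convex_setOf_abs_add_abs_add_abs_le
    (2 • LinearMap.proj 0 - LinearMap.proj 2 : (Fin 3 → ℝ) →ₗ[ℝ] ℝ)
    (2 • LinearMap.proj 1 - LinearMap.proj 2) (LinearMap.proj 2) 2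
  simp only [LinearMap.sub_apply, LinearMap.smul_apply, LinearMap.proj_apply, nsmul_eq_mul,
    Nat.cast_ofNat] at hconv
  refine convexHull_min ?_ hconv
  rintro _ ⟨q, hq, rfl⟩
  rcases hq with rfl | rfl | rfl | rfl | rfl | rfl <;> norm_num [toR, Matrix.cons_val_two]

theorem eq_zero_or_mem_octahedron112 {x y z : ℤ} (h : |2 * x - z| + |2 * y - z| + |z| ≤ 2) :
    ![x, y, z] = 0 ∨ ![x, y, z] ∈ octahedron112 := by
  have hcases : (x = 0 ∧ y = 0 ∧ z = 0) ∨ (x = 1 ∧ y = 0 ∧ z = 0) ∨ (x = -1 ∧ y = 0 ∧ z = 0) ∨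
      (x = 0 ∧ y = 1 ∧ z = 0) ∨ (x = 0 ∧ y = -1 ∧ z = 0) ∨ (x = 1 ∧ y = 1 ∧ z = 2) ∨
      (x = -1 ∧ y = -1 ∧ z = -2) := by
    rcases abs_cases (2 * x - z) with ⟨h₁, h₁'⟩ | ⟨h₁, h₁'⟩ <;>
    rcases abs_cases (2 * y - z) with ⟨h₂, h₂'⟩ | ⟨h₂, h₂'⟩ <;>
    rcases abs_cases z with ⟨h₃, h₃'⟩ | ⟨h₃, h₃'⟩ <;> omega
  rcases hcases with ⟨rfl, rfl, rfl⟩ | ⟨rfl, rfl, rfl⟩ | ⟨rfl, rfl, rfl⟩ | ⟨rfl, rfl, rfl⟩ |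
    ⟨rfl, rfl, rfl⟩ | ⟨rfl, rfl, rfl⟩ | ⟨rfl, rfl, rfl⟩ <;> simp

theorem octahedron_112_isFano :
    IsFanoPolytope
      ({![1, 0, 0], ![-1, 0, 0], ![0, 1, 0], ![0, -1, 0], ![1, 1, 2], ![-1, -1, -2]} :
        Set (Fin 3 → ℤ)) := by
  refine ⟨zero_mem_interior_convexHull_octahedron112, fun p hp => ?_⟩
  have hle := convexHull_octahedron112_subset hp
  simp only [toR, Set.mem_ofPred_eq] at hle
  rw [← FinVec.etaExpand_eq p]
  exact eq_zero_or_mem_octahedron112 (by exact_mod_cast hle)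
end
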